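/- arXiv:1809.07511 — 2 statements merged into one kernel-verified Lean document; each statement's English description precedes it below -/
import Mathlib

section
/- Let a_0(n), a_1(n) be real sequences with 2a_0(n) + a_1(n) = 1 for all n, and suppose L_1 := lim_{n→∞} a_1(n) exists. Let f : [0,1] → ℝ be twice continuously differentiable and x ∈ [0,1]. Then lim_{n→∞} n·(B_n^{M,1}(f;x) − f(x)) = (x(1−x)/2) f″(x) + ((1−2x)/2)(1 + L_1) f′(x). -/
open scoped BigOperators
open Set Filter MeasureTheory

/-- Bernstein fundamental function `p_{n,k}` (vanishes for `k > n` since `choose = 0`). -/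
noncomputable def bp (n k : ℕ) (x : ℝ) : ℝ :=
  (n.choose k : ℝ) * x ^ k * (1 - x) ^ (n - k)

/-- Bernstein fundamental function with integer index, vanishing for negative `k`. -/
noncomputable def bpz (n : ℕ) (k : ℤ) (x : ℝ) : ℝ :=
  if 0 ≤ k then bp n k.toNat x else 0

/-- The classical Bernstein operator `B_n`. -/
noncomputable def Bern (n : ℕ) (f : ℝ → ℝ) (x : ℝ) : ℝ :=
  ∑ k ∈ Finset.range (n + 1), bp n k x * f (k / n)

/-- Modified fundamental function `p_{n,k}^{M,1}` with `a(x,n) = a1*x + a0`. -/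
noncomputable def bpM1 (a0 a1 : ℝ) (n k : ℕ) (x : ℝ) : ℝ :=
  (a1 * x + a0) * bp (n - 1) k x + (a1 * (1 - x) + a0) * bpz (n - 1) ((k : ℤ) - 1) x

/-- The modified Bernstein operator `B_n^{M,1}`. -/
noncomputable def BernM1 (a0 a1 : ℝ) (n : ℕ) (f : ℝ → ℝ) (x : ℝ) : ℝ :=
  ∑ k ∈ Finset.range (n + 1), bpM1 a0 a1 n k x * f (k / n)

/-- Second modified fundamental function `p_{n,k}^{M,2}`. -/
noncomputable def bpM2 (n k : ℕ) (x : ℝ) : ℝ :=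
  ((n : ℝ) / 2 * x ^ 2 + (-1 - (n : ℝ) / 2) * x + 1) * bp (n - 2) k x
    + (n : ℝ) * x * (1 - x) * bpz (n - 2) ((k : ℤ) - 1) x
    + ((n : ℝ) / 2 * x ^ 2 + (-(n : ℝ) / 2 + 1) * x) * bpz (n - 2) ((k : ℤ) - 2) x

/-- The second modified Bernstein operator `B_n^{M,2}`. -/
noncomputable def BernM2 (n : ℕ) (f : ℝ → ℝ) (x : ℝ) : ℝ :=
  ∑ k ∈ Finset.range (n + 1), bpM2 n k x * f (k / n)

/-- The Kantorovich operator `K_n`. -/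
noncomputable def Kan (n : ℕ) (f : ℝ → ℝ) (x : ℝ) : ℝ :=
  ((n : ℝ) + 1) * ∑ k ∈ Finset.range (n + 1),
    bp n k x * ∫ t in ((k : ℝ) / (n + 1))..(((k : ℝ) + 1) / (n + 1)), f t

/-- The modified Kantorovich operator `K_n^{M,1}`. -/
noncomputable def KanM1 (a0 a1 : ℝ) (n : ℕ) (f : ℝ → ℝ) (x : ℝ) : ℝ :=
  ((n : ℝ) + 1) * ∑ k ∈ Finset.range (n + 1),
    bpM1 a0 a1 n k x * ∫ t in ((k : ℝ) / (n + 1))..(((k : ℝ) + 1) / (n + 1)), f t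

/-- The Durrmeyer operator `D_n`. -/
noncomputable def Dur (n : ℕ) (f : ℝ → ℝ) (x : ℝ) : ℝ :=
  ((n : ℝ) + 1) * ∑ k ∈ Finset.range (n + 1),
    bp n k x * ∫ t in (0:ℝ)..1, bp n k t * f t

/-- The modified Durrmeyer operator `D_n^{M,1}`. -/
noncomputable def DurM1 (a0 a1 : ℝ) (n : ℕ) (f : ℝ → ℝ) (x : ℝ) : ℝ :=
  ((n : ℝ) + 1) * ∑ k ∈ Finset.range (n + 1),
    bpM1 a0 a1 n k x * ∫ t in (0:ℝ)..1, bp n k t * f t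

/-- The genuine Bernstein–Durrmeyer operator `U_n`. -/
noncomputable def Gen (n : ℕ) (f : ℝ → ℝ) (x : ℝ) : ℝ :=
  (1 - x) ^ n * f 0 + x ^ n * f 1 +
    ((n : ℝ) - 1) * ∑ k ∈ Finset.Icc 1 (n - 1),
      bp n k x * ∫ t in (0:ℝ)..1, bp (n - 2) (k - 1) t * f t

/-- The modified genuine Bernstein–Durrmeyer operator `U_n^{M,1}`. -/
noncomputable def GenM1 (a0 a1 : ℝ) (n : ℕ) (f : ℝ → ℝ) (x : ℝ) : ℝ :=
  (a1 * x + a0) * (1 - x) ^ (n - 1) * f 0 + (a1 * (1 - x) + a0) * x ^ (n - 1) * f 1 +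
    ((n : ℝ) - 1) * ∑ k ∈ Finset.Icc 1 (n - 1),
      bpM1 a0 a1 n k x * ∫ t in (0:ℝ)..1, bp (n - 2) (k - 1) t * f t

/-- First modulus of continuity on `[0,1]`. -/
noncomputable def omega1 (f : ℝ → ℝ) (δ : ℝ) : ℝ :=
  sSup {y | ∃ s t : ℝ, s ∈ Icc (0:ℝ) 1 ∧ t ∈ Icc (0:ℝ) 1 ∧ |s - t| ≤ δ ∧ y = |f s - f t|}

/-- Second modulus of smoothness on `[0,1]`. -/
noncomputable def omega2 (f : ℝ → ℝ) (δ : ℝ) : ℝ :=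
  sSup {y | ∃ t h : ℝ, 0 < h ∧ h ≤ δ ∧ t - h ∈ Icc (0:ℝ) 1 ∧ t + h ∈ Icc (0:ℝ) 1 ∧
    y = |f (t + h) - 2 * f t + f (t - h)|}

/-- Sup norm on `[0,1]`. -/
noncomputable def supNorm (g : ℝ → ℝ) : ℝ :=
  sSup {y | ∃ t ∈ Icc (0:ℝ) 1, y = |g t|}

/-!
Writing `n = m + 1`, the operator splits as `B_n^{M,1}(f;x) = a(x,n) S_0 + a(1-x,n) S_1`, where
`S_s = ∑ₖ p_{m,k}(x) f((k + s)/(m + 1))` is a Bernstein sum with nodes shifted by `s/(m + 1)`.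
About `x`, the first two moments of `S_s` are `(s - x)/(m + 1)` and
`(m x(1-x) + (s - x)²)/(m + 1)²`, and its fourth moment is `O(m⁻²)`; with Taylor's formula
with Peano remainder this gives `(m + 1)(S_s f - f x) → (s - x) f'(x) + x(1-x)/2 f''(x)`.
As `a(x,n) + a(1-x,n) = 1`, the weights only enter the first-order term, where
`-x a(x,n) + (1 - x) a(1-x,n) → (1 - 2x)(1 + L₁)/2`.
-/

open Topology Asymptotics

lemma bp_nonneg (m k : ℕ) {x : ℝ} (hx : x ∈ Icc (0:ℝ) 1) : 0 ≤ bp m k x := by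
  have h0 : 0 ≤ x := hx.1
  have h1 : 0 ≤ 1 - x := sub_nonneg.2 hx.2
  unfold bp
  positivity

lemma bp_eq_zero_of_lt {m k : ℕ} (h : m < k) (x : ℝ) : bp m k x = 0 := by
  simp [bp, Nat.choose_eq_zero_of_lt h]

lemma sum_bp (m : ℕ) (x : ℝ) : ∑ k ∈ Finset.range (m + 1), bp m k x = 1 := by
  have h := (add_pow x (1 - x) m).symm
  rw [add_sub_cancel, one_pow] at h
  rw [← h]
  exact Finset.sum_congr rfl fun k _ => by unfold bp; ring

lemma sum_descPochhammer_eval_mul_bp (m j : ℕ) (x : ℝ) :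
    ∑ k ∈ Finset.range (m + 1), (descPochhammer ℝ j).eval (k : ℝ) * bp m k x
      = (descPochhammer ℝ j).eval (m : ℝ) * x ^ j := by
  simp only [descPochhammer_eval_eq_descFactorial]
  rcases lt_or_ge m j with hmj | hjm
  · rw [Nat.descFactorial_eq_zero_iff_lt.2 hmj, Nat.cast_zero, zero_mul]
    refine Finset.sum_eq_zero fun k hk => ?_
    rw [Nat.descFactorial_eq_zero_iff_lt.2 (by rw [Finset.mem_range] at hk; omega), Nat.cast_zero, zero_mul]
  obtain ⟨n, rfl⟩ := Nat.exists_eq_add_of_le hjm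
  have hshift (i : ℕ) : ((j + i).descFactorial j : ℝ) * bp (j + n) (j + i) x
      = (j + n).descFactorial j * x ^ j * bp n i x := by
    have hc : ((j + i).descFactorial j : ℝ) * (j + n).choose (j + i)
        = (j + n).descFactorial j * n.choose i := by
      norm_cast
      simp only [Nat.descFactorial_eq_factorial_mul_choose, mul_assoc]
      rw [mul_comm ((j + i).choose j), Nat.choose_mul (by omega)]
      simp
    simp only [bp, Nat.add_sub_add_left, pow_add]
    linear_combination (x ^ j * x ^ i * (1 - x) ^ (n - i)) * hc
  rw [show j + n + 1 = j + (n + 1) by ring, Finset.sum_range_add,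
    Finset.sum_eq_zero fun k hk => by
      rw [Nat.descFactorial_eq_zero_iff_lt.2 (by simpa using hk), Nat.cast_zero, zero_mul]]
  simp only [hshift, zero_add, ← Finset.mul_sum, sum_bp, mul_one]

lemma sum_sub_mul_bp (m : ℕ) (x : ℝ) :
    ∑ k ∈ Finset.range (m + 1), ((k : ℝ) - m * x) * bp m k x = 0 := by
  have hexp (k : ℕ) : ((k : ℝ) - m * x) * bp m k x
      = (descPochhammer ℝ 1).eval (k : ℝ) * bp m k x - m * x * bp m k x := by
    simp only [descPochhammer_succ_eval, descPochhammer_zero, Polynomial.eval_one]; ring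
  simp only [hexp, Finset.sum_sub_distrib, ← Finset.mul_sum, sum_bp,
    sum_descPochhammer_eval_mul_bp]
  simp only [descPochhammer_succ_eval, descPochhammer_zero, Polynomial.eval_one]
  ring

lemma sum_sub_sq_mul_bp (m : ℕ) (x : ℝ) :
    ∑ k ∈ Finset.range (m + 1), ((k : ℝ) - m * x) ^ 2 * bp m k x = m * x * (1 - x) := by
  set c : ℝ := m * x
  have hexp (k : ℕ) : ((k : ℝ) - c) ^ 2 * bp m k x
      = (descPochhammer ℝ 2).eval (k : ℝ) * bp m k x
        + (1 - 2 * c) * ((descPochhammer ℝ 1).eval (k : ℝ) * bp m k x) + c ^ 2 * bp m k x := by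
    simp only [descPochhammer_succ_eval, descPochhammer_zero, Polynomial.eval_one]; ring
  simp only [hexp, Finset.sum_add_distrib, ← Finset.mul_sum, sum_bp,
    sum_descPochhammer_eval_mul_bp]
  simp only [descPochhammer_succ_eval, descPochhammer_zero, Polynomial.eval_one, c]
  ring

lemma sum_sub_pow_four_mul_bp (m : ℕ) (x : ℝ) :
    ∑ k ∈ Finset.range (m + 1), ((k : ℝ) - m * x) ^ 4 * bp m k x
      = m * x * (1 - x) * (1 + 3 * (m - 2) * x * (1 - x)) := by
  set c : ℝ := m * x
  have hexp (k : ℕ) : ((k : ℝ) - c) ^ 4 * bp m k x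
      = (descPochhammer ℝ 4).eval (k : ℝ) * bp m k x
        + (6 - 4 * c) * ((descPochhammer ℝ 3).eval (k : ℝ) * bp m k x)
        + (7 - 12 * c + 6 * c ^ 2) * ((descPochhammer ℝ 2).eval (k : ℝ) * bp m k x)
        + (1 - 4 * c + 6 * c ^ 2 - 4 * c ^ 3) * ((descPochhammer ℝ 1).eval (k : ℝ) * bp m k x)
        + c ^ 4 * bp m k x := by
    simp only [descPochhammer_succ_eval, descPochhammer_zero, Polynomial.eval_one]; ring
  simp only [hexp, Finset.sum_add_distrib, ← Finset.mul_sum, sum_bp,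
    sum_descPochhammer_eval_mul_bp]
  simp only [descPochhammer_succ_eval, descPochhammer_zero, Polynomial.eval_one, c]
  ring

noncomputable def bernShift (m : ℕ) (s : ℝ) (g : ℝ → ℝ) (x : ℝ) : ℝ :=
  ∑ k ∈ Finset.range (m + 1), bp m k x * g ((k + s) / (m + 1))

lemma bernShift_add (m : ℕ) (s x : ℝ) (g h : ℝ → ℝ) :
    bernShift m s (fun t => g t + h t) x = bernShift m s g x + bernShift m s h x := by
  simp only [bernShift, mul_add, Finset.sum_add_distrib]

lemma bernShift_const_mul (m : ℕ) (s x c : ℝ) (g : ℝ → ℝ) :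
    bernShift m s (fun t => c * g t) x = c * bernShift m s g x := by
  simp only [bernShift, Finset.mul_sum]
  exact Finset.sum_congr rfl fun k _ => by ring

lemma bernShift_const (m : ℕ) (s x c : ℝ) : bernShift m s (fun _ => c) x = c := by
  rw [bernShift, ← Finset.sum_mul, sum_bp, one_mul]

lemma bernShift_sub (m : ℕ) (s x : ℝ) :
    bernShift m s (fun t => t - x) x = (s - x) / (m + 1) := by
  have hexp (k : ℕ) : bp m k x * ((k + s) / (m + 1) - x)
      = ((k - m * x) * bp m k x + (s - x) * bp m k x) / (m + 1) := by
    field_simp; ring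
  simp only [bernShift, hexp, ← Finset.sum_div, Finset.sum_add_distrib, ← Finset.mul_sum,
    sum_sub_mul_bp, sum_bp]
  ring

lemma bernShift_sub_sq (m : ℕ) (s x : ℝ) :
    bernShift m s (fun t => (t - x) ^ 2) x = (m * x * (1 - x) + (s - x) ^ 2) / (m + 1) ^ 2 := by
  have hexp (k : ℕ) : bp m k x * ((k + s) / (m + 1) - x) ^ 2
      = ((k - m * x) ^ 2 * bp m k x + 2 * (s - x) * ((k - m * x) * bp m k x)
          + (s - x) ^ 2 * bp m k x) / (m + 1) ^ 2 := by
    field_simp; ring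
  simp only [bernShift, hexp, ← Finset.sum_div, Finset.sum_add_distrib, ← Finset.mul_sum,
    sum_sub_sq_mul_bp, sum_sub_mul_bp, sum_bp]
  ring

lemma sum_sub_pow_four_mul_bp_le (m : ℕ) {x : ℝ} (hx : x ∈ Icc (0:ℝ) 1) :
    ∑ k ∈ Finset.range (m + 1), ((k : ℝ) - m * x) ^ 4 * bp m k x ≤ (m + 1) ^ 2 := by
  rw [sum_sub_pow_four_mul_bp]
  have hq : x * (1 - x) ≤ 1 / 4 := by nlinarith [sq_nonneg (x - 1 / 2)]
  have hq0 : 0 ≤ x * (1 - x) := mul_nonneg hx.1 (sub_nonneg.2 hx.2)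
  have hm : (0 : ℝ) ≤ m := m.cast_nonneg
  nlinarith [mul_nonneg hm hq0, mul_nonneg (mul_nonneg hm hm) (mul_nonneg hq0 hq0),
    mul_nonneg hm (sub_nonneg.2 hq), mul_nonneg (mul_nonneg hm hm) (sub_nonneg.2 hq)]

lemma bernShift_sub_pow_four_le (m : ℕ) {s x : ℝ} (hs : s ∈ Icc (0:ℝ) 1)
    (hx : x ∈ Icc (0:ℝ) 1) :
    bernShift m s (fun t => (t - x) ^ 4) x ≤ 16 / (m + 1) ^ 2 := by
  have hb : (s - x) ^ 2 ≤ 1 := by nlinarith [hs.1, hs.2, hx.1, hx.2]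
  have hterm (k : ℕ) : bp m k x * ((k + s) / (m + 1) - x) ^ 4
      ≤ (8 * (((k : ℝ) - m * x) ^ 4 * bp m k x) + 8 * bp m k x) / (m + 1) ^ 4 := by
    have hsplit : (k + s) / (m + 1) - x = ((k - m * x) + (s - x)) / (m + 1) := by
      field_simp; ring
    have hpow : ((k - m * x) + (s - x)) ^ 4 ≤ 8 * ((k : ℝ) - m * x) ^ 4 + 8 := by
      nlinarith [sq_nonneg (((k : ℝ) - m * x) - (s - x)), sq_nonneg ((s - x) ^ 2),
        sq_nonneg (((k : ℝ) - m * x) ^ 2 - (s - x) ^ 2), sq_nonneg (((k : ℝ) - m * x) * (s - x))]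
    rw [hsplit, div_pow, ← mul_div_assoc]
    gcongr
    nlinarith [bp_nonneg m k hx]
  calc bernShift m s (fun t => (t - x) ^ 4) x
      ≤ ∑ k ∈ Finset.range (m + 1),
          (8 * (((k : ℝ) - m * x) ^ 4 * bp m k x) + 8 * bp m k x) / (m + 1) ^ 4 :=
        Finset.sum_le_sum fun k _ => hterm k
    _ = (8 * ∑ k ∈ Finset.range (m + 1), ((k : ℝ) - m * x) ^ 4 * bp m k x + 8) / (m + 1) ^ 4 := by
        simp only [← Finset.sum_div, Finset.sum_add_distrib, ← Finset.mul_sum, sum_bp, mul_one]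
    _ ≤ (8 * (m + 1) ^ 2 + 8 * (m + 1) ^ 2) / (m + 1) ^ 4 := by
        gcongr
        · exact sum_sub_pow_four_mul_bp_le m hx
        · nlinarith [(m.cast_nonneg : (0 : ℝ) ≤ m)]
    _ = 16 / (m + 1) ^ 2 := by field_simp; ring

lemma abs_bernShift_le {m : ℕ} {s x : ℝ} (hs : s ∈ Icc (0:ℝ) 1) (hx : x ∈ Icc (0:ℝ) 1)
    {g h : ℝ → ℝ} (hgh : ∀ t ∈ Icc (0:ℝ) 1, |g t| ≤ h t) :
    |bernShift m s g x| ≤ bernShift m s h x := by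
  refine (Finset.abs_sum_le_sum_abs _ _).trans (Finset.sum_le_sum fun k hk => ?_)
  rw [abs_mul, abs_of_nonneg (bp_nonneg m k hx)]
  refine mul_le_mul_of_nonneg_left (hgh _ ⟨by have := hs.1; positivity, ?_⟩) (bp_nonneg m k hx)
  rw [div_le_one (by positivity)]
  have : (k : ℝ) ≤ m := by exact_mod_cast Finset.mem_range_succ_iff.1 hk
  linarith [hs.2]

lemma taylor_remainder_isLittleO {f f' : ℝ → ℝ} {c x : ℝ} {S : Set ℝ} (hS : Convex ℝ S)
    (hx : x ∈ S) (hf : ∀ t ∈ S, HasDerivWithinAt f (f' t) S t)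
    (hf'x : HasDerivWithinAt f' c S x) :
    (fun t => f t - f x - f' x * (t - x) - c / 2 * (t - x) ^ 2) =o[𝓝[S] x]
      fun t => (t - x) ^ 2 := by
  have hpoly (t : ℝ) : HasDerivAt (fun t => f' x * (t - x) + c / 2 * (t - x) ^ 2)
      (f' x + (t - x) * c) t :=
    ((((hasDerivAt_id' t).sub_const x).const_mul (f' x)).add
      ((((hasDerivAt_id' t).sub_const x).pow 2).const_mul (c / 2))).congr_deriv (by ring)
  have hR : ∀ t ∈ S, HasDerivWithinAt (fun t => f t - (f' x * (t - x) + c / 2 * (t - x) ^ 2))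
      (f' t - f' x - (t - x) * c) S t := fun t ht =>
    ((hf t ht).sub (hpoly t).hasDerivWithinAt).congr_deriv (by ring)
  have h := hS.isLittleO_pow_succ_real hx hR (n := 1)
    (by simpa only [pow_one, smul_eq_mul] using hasDerivWithinAt_iff_isLittleO.1 hf'x)
  exact h.congr_left fun t => by ring

lemma exists_abs_le_sq_add_pow_four {S : Set ℝ} {x M : ℝ} {r : ℝ → ℝ}
    (hr : r =o[𝓝[S] x] fun t => (t - x) ^ 2) (hM : ∀ t ∈ S, |r t| ≤ M) {ε : ℝ} (hε : 0 < ε) :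
    ∃ K, 0 ≤ K ∧ ∀ t ∈ S, |r t| ≤ ε * (t - x) ^ 2 + K * (t - x) ^ 4 := by
  obtain ⟨δ, hδ, hnear⟩ := Metric.mem_nhdsWithin_iff.1 (hr.def hε)
  have hM₀ : 0 ≤ max M 0 := le_max_right M 0
  refine ⟨max M 0 / δ ^ 4, by positivity, fun t ht => ?_⟩
  have hsq : 0 ≤ ε * (t - x) ^ 2 := by positivity
  have hquart : 0 ≤ max M 0 / δ ^ 4 * (t - x) ^ 4 := by positivity
  rcases lt_or_ge |t - x| δ with hclose | hfar
  · have h : |r t| ≤ ε * |(t - x) ^ 2| := hnear ⟨by rwa [Metric.mem_ball, Real.dist_eq], ht⟩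
    rw [abs_of_nonneg (sq_nonneg (t - x))] at h
    linarith
  · have hδt : δ ^ 4 ≤ (t - x) ^ 4 := by
      simpa only [Even.pow_abs ⟨2, rfl⟩] using pow_le_pow_left₀ hδ.le hfar 4
    calc |r t| ≤ max M 0 / δ ^ 4 * δ ^ 4 := by
          rw [div_mul_cancel₀ _ (by positivity)]; exact (hM t ht).trans (le_max_left M 0)
      _ ≤ max M 0 / δ ^ 4 * (t - x) ^ 4 := by gcongr
      _ ≤ _ := by linarith

lemma tendsto_mul_bernShift_of_abs_le {s x : ℝ} (hs : s ∈ Icc (0:ℝ) 1) (hx : x ∈ Icc (0:ℝ) 1)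
    {r : ℝ → ℝ} (hr : ∀ ε > 0, ∃ K, 0 ≤ K ∧
      ∀ t ∈ Icc (0:ℝ) 1, |r t| ≤ ε * (t - x) ^ 2 + K * (t - x) ^ 4) :
    Tendsto (fun m : ℕ => ((m : ℝ) + 1) * bernShift m s r x) atTop (𝓝 0) := by
  rw [Metric.tendsto_atTop]
  intro ε hε
  obtain ⟨K, hK, hrK⟩ := hr (ε / 2) (half_pos hε)
  obtain ⟨N, hN⟩ := exists_nat_gt (32 * K / ε)
  refine ⟨N, fun m hm => ?_⟩
  have hm1 : (0 : ℝ) < m + 1 := by positivity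
  have hNm : (N : ℝ) + 1 ≤ m + 1 := by gcongr
  have h2 : ((m : ℝ) + 1) * bernShift m s (fun t => (t - x) ^ 2) x ≤ 1 := by
    have hq : x * (1 - x) ≤ 1 := by nlinarith [hx.1, hx.2]
    have hb : (s - x) ^ 2 ≤ 1 := by nlinarith [hs.1, hs.2, hx.1, hx.2]
    have hnum : m * x * (1 - x) + (s - x) ^ 2 ≤ m + 1 := by
      nlinarith [mul_le_mul_of_nonneg_left hq (m.cast_nonneg : (0 : ℝ) ≤ m)]
    rw [bernShift_sub_sq, mul_div_assoc', div_le_one (by positivity)]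
    nlinarith [mul_le_mul_of_nonneg_left hnum hm1.le]
  have h4 : ((m : ℝ) + 1) * bernShift m s (fun t => (t - x) ^ 4) x ≤ 16 / (m + 1) := by
    calc ((m : ℝ) + 1) * bernShift m s (fun t => (t - x) ^ 4) x
        ≤ (m + 1) * (16 / (m + 1) ^ 2) := by gcongr; exact bernShift_sub_pow_four_le m hs hx
      _ = 16 / (m + 1) := by field_simp
  have habs : |bernShift m s r x|
      ≤ ε / 2 * bernShift m s (fun t => (t - x) ^ 2) x
        + K * bernShift m s (fun t => (t - x) ^ 4) x := by
    refine (abs_bernShift_le hs hx hrK).trans_eq ?_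
    rw [bernShift_add, bernShift_const_mul, bernShift_const_mul]
  have hKm : K * (16 / (m + 1)) < ε / 2 := by
    rw [mul_div_assoc', div_lt_iff₀ hm1]
    rw [div_lt_iff₀ hε] at hN
    nlinarith
  rw [Real.dist_eq, sub_zero, abs_mul, abs_of_pos hm1]
  calc ((m : ℝ) + 1) * |bernShift m s r x|
      ≤ (m + 1) * (ε / 2 * bernShift m s (fun t => (t - x) ^ 2) x
        + K * bernShift m s (fun t => (t - x) ^ 4) x) := by gcongr
    _ = ε / 2 * ((m + 1) * bernShift m s (fun t => (t - x) ^ 2) x)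
        + K * ((m + 1) * bernShift m s (fun t => (t - x) ^ 4) x) := by ring
    _ ≤ ε / 2 * 1 + K * (16 / (m + 1)) := by gcongr
    _ < ε := by linarith

lemma tendsto_bernShift_voronovskaya {f f' : ℝ → ℝ} {c s x : ℝ} (hs : s ∈ Icc (0:ℝ) 1)
    (hx : x ∈ Icc (0:ℝ) 1) (hf : ∀ t ∈ Icc (0:ℝ) 1, HasDerivWithinAt f (f' t) (Icc 0 1) t)
    (hf'x : HasDerivWithinAt f' c (Icc 0 1) x) :
    Tendsto (fun m : ℕ => ((m : ℝ) + 1) * (bernShift m s f x - f x)) atTop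
      (𝓝 ((s - x) * f' x + x * (1 - x) / 2 * c)) := by
  set r : ℝ → ℝ := fun t => f t - f x - f' x * (t - x) - c / 2 * (t - x) ^ 2
  have hdecomp (m : ℕ) : ((m : ℝ) + 1) * (bernShift m s f x - f x)
      = (s - x) * f' x + c / 2 * (x * (1 - x) + ((s - x) ^ 2 - x * (1 - x)) * (1 / (m + 1)))
        + (m + 1) * bernShift m s r x := by
    have hf_eq : bernShift m s f x = bernShift m s
        (fun t => f x + (f' x * (t - x) + (c / 2 * (t - x) ^ 2 + r t))) x := by
      congr 1; funext t; simp only [r]; ring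
    rw [hf_eq, bernShift_add, bernShift_const, bernShift_add, bernShift_const_mul, bernShift_add,
      bernShift_const_mul, bernShift_sub, bernShift_sub_sq]
    field_simp
    ring
  have hr : ∀ ε > 0, ∃ K, 0 ≤ K ∧
      ∀ t ∈ Icc (0:ℝ) 1, |r t| ≤ ε * (t - x) ^ 2 + K * (t - x) ^ 4 := by
    have hcont : ContinuousOn r (Icc 0 1) := by
      have hfc : ContinuousOn f (Icc 0 1) := fun t ht => (hf t ht).continuousWithinAt
      fun_prop
    obtain ⟨M, hM⟩ := isCompact_Icc.exists_bound_of_continuousOn hcont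
    exact fun ε hε => exists_abs_le_sq_add_pow_four
      (taylor_remainder_isLittleO (convex_Icc 0 1) hx hf hf'x) hM hε
  simp_rw [hdecomp]
  convert (tendsto_const_nhds.add ((tendsto_const_nhds.add
    (tendsto_one_div_add_atTop_nhds_zero_nat.const_mul _)).const_mul (c / 2))).add
    (tendsto_mul_bernShift_of_abs_le hs hx hr) using 2
  ring

lemma BernM1_succ (a0 a1 : ℝ) (m : ℕ) (f : ℝ → ℝ) (x : ℝ) :
    BernM1 a0 a1 (m + 1) f x
      = (a1 * x + a0) * bernShift m 0 f x + (a1 * (1 - x) + a0) * bernShift m 1 f x := by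
  have h0 : ∑ k ∈ Finset.range (m + 2), bp m k x * f (k / (m + 1 : ℕ))
      = bernShift m 0 f x := by
    rw [Finset.sum_range_succ, bp_eq_zero_of_lt (Nat.lt_succ_self m), zero_mul, add_zero,
      bernShift]
    push_cast
    simp only [add_zero]
  have h1 : ∑ k ∈ Finset.range (m + 2), bpz m ((k : ℤ) - 1) x * f (k / (m + 1 : ℕ))
      = bernShift m 1 f x := by
    rw [Finset.sum_range_succ', bernShift]
    simp [bpz]
  rw [← h0, ← h1, Finset.mul_sum, Finset.mul_sum, ← Finset.sum_add_distrib]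
  exact Finset.sum_congr rfl fun k _ => by simp only [bpM1, Nat.add_sub_cancel]; ring

theorem stmt2_general (a0 a1 : ℕ → ℝ) (ha : ∀ m, 2 * a0 m + a1 m = 1) (L1 : ℝ)
    (hL : Tendsto a1 atTop (nhds L1))
    (f f' f'' : ℝ → ℝ)
    (hf : ∀ t ∈ Icc (0:ℝ) 1, HasDerivWithinAt f (f' t) (Icc 0 1) t)
    (hf' : ∀ t ∈ Icc (0:ℝ) 1, HasDerivWithinAt f' (f'' t) (Icc 0 1) t)
    (x : ℝ) (hx : x ∈ Icc (0:ℝ) 1) :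
    Tendsto (fun n : ℕ => (n : ℝ) * (BernM1 (a0 n) (a1 n) n f x - f x)) atTop
      (nhds (x * (1 - x) / 2 * f'' x + (1 - 2 * x) / 2 * (1 + L1) * f' x)) := by
  have ha0 : Tendsto a0 atTop (𝓝 ((1 - L1) / 2)) :=
    ((tendsto_const_nhds.sub hL).div_const 2).congr fun n => by linarith [ha n]
  have hweight (y : ℝ) : Tendsto (fun m : ℕ => a1 (m + 1) * y + a0 (m + 1)) atTop
      (𝓝 (L1 * y + (1 - L1) / 2)) :=
    ((hL.mul_const y).add ha0).comp (tendsto_add_atTop_nat 1)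
  have hS0 := tendsto_bernShift_voronovskaya ⟨le_rfl, zero_le_one⟩ hx hf (hf' x hx)
  have hS1 := tendsto_bernShift_voronovskaya ⟨zero_le_one, le_rfl⟩ hx hf (hf' x hx)
  have hsplit (m : ℕ) : ((m + 1 : ℕ) : ℝ) * (BernM1 (a0 (m + 1)) (a1 (m + 1)) (m + 1) f x - f x)
      = (a1 (m + 1) * x + a0 (m + 1)) * ((m + 1) * (bernShift m 0 f x - f x))
        + (a1 (m + 1) * (1 - x) + a0 (m + 1)) * ((m + 1) * (bernShift m 1 f x - f x)) := by
    rw [BernM1_succ]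
    push_cast
    linear_combination ((m : ℝ) + 1) * f x * ha (m + 1)
  rw [← tendsto_add_atTop_iff_nat 1]
  simp only [hsplit]
  convert ((hweight x).mul hS0).add ((hweight (1 - x)).mul hS1) using 2
  ring

/-- Voronovskaya-type limit for `B_n^{M,1}`. -/
theorem stmt2 (a0 a1 : ℕ → ℝ) (ha : ∀ m, 2 * a0 m + a1 m = 1) (L1 : ℝ)
    (hL : Tendsto a1 atTop (nhds L1))
    (f f' f'' : ℝ → ℝ)
    (hf : ∀ t ∈ Icc (0:ℝ) 1, HasDerivWithinAt f (f' t) (Icc 0 1) t)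
    (hf' : ∀ t ∈ Icc (0:ℝ) 1, HasDerivWithinAt f' (f'' t) (Icc 0 1) t)
    (hf'' : ContinuousOn f'' (Icc 0 1))
    (x : ℝ) (hx : x ∈ Icc (0:ℝ) 1) :
    Tendsto (fun n : ℕ => (n : ℝ) * (BernM1 (a0 n) (a1 n) n f x - f x)) atTop
      (nhds (x * (1 - x) / 2 * f'' x + (1 - 2 * x) / 2 * (1 + L1) * f' x)) :=
  stmt2_general a0 a1 ha L1 hL f f' f'' hf hf' x hx
end

section
/- Let n ≥ 1, let f : [0,1] → ℝ be continuously differentiable, and let x ∈ [0,1]. Then the derivative of the polynomial x ↦ K_n(f;x) satisfies |(K_n f)′(x)| ≤ (n/(n+1))·‖f′‖_∞ ≤ ‖f′‖_∞. -/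
/-!
Since `p_{n,k}' = n (p_{n-1,k-1} - p_{n-1,k})`, summation by parts gives
`(K_n f)' = n (n+1) ∑_j p_{n-1,j} (a_{j+1} - a_j)`, where `a_k` is the integral of `f` over the
cell `[k/(n+1), (k+1)/(n+1)]`. The difference `a_{j+1} - a_j` is the integral over one cell of
`f (t + 1/(n+1)) - f t`, which the mean value theorem bounds pointwise by `‖f'‖_∞ / (n+1)`; the weights
`p_{n-1,j}(x)` are nonnegative and sum to `1`.
-/

open scoped BigOperators
open Set Filter MeasureTheory

open Polynomial

namespace bernsteinPolynomial

variable {R : Type*} [CommRing R]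

theorem derivative_sum_smul (n : ℕ) (a : ℕ → R) :
    derivative (∑ k ∈ Finset.range (n + 1), a k • bernsteinPolynomial R n k) =
      n * ∑ j ∈ Finset.range n, (a (j + 1) - a j) • bernsteinPolynomial R (n - 1) j := by
  rcases n with _ | n
  · simp [derivative_zero]
  have hshift : ∑ j ∈ Finset.range (n + 1), a j • bernsteinPolynomial R n j =
      ∑ j ∈ Finset.range (n + 1), a (j + 1) • bernsteinPolynomial R n (j + 1) +
        a 0 • bernsteinPolynomial R n 0 := by
    rw [Finset.sum_range_succ', Finset.sum_range_succ, eq_zero_of_lt R n.lt_succ_self,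
      smul_zero, add_zero]
  have hsucc (j : ℕ) : derivative (a (j + 1) • bernsteinPolynomial R (n + 1) (j + 1)) =
      ((n + 1 : ℕ) : R[X]) * (a (j + 1) • bernsteinPolynomial R n j -
        a (j + 1) • bernsteinPolynomial R n (j + 1)) := by
    rw [derivative_smul, derivative_succ, ← mul_smul_comm, smul_sub, add_tsub_cancel_right]
  rw [derivative_sum, Finset.sum_range_succ', Finset.sum_congr rfl fun j _ => hsucc j,
    ← Finset.mul_sum, Finset.sum_sub_distrib, derivative_smul, derivative_zero]
  simp only [sub_smul, Finset.sum_sub_distrib, add_tsub_cancel_right]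
  rw [hshift]
  simp only [smul_eq_C_mul]
  ring

theorem eval_nonneg {n k : ℕ} {x : ℝ} (hx : x ∈ Icc (0 : ℝ) 1) :
    0 ≤ (bernsteinPolynomial ℝ n k).eval x := by
  obtain ⟨hx0, hx1⟩ := hx
  have : 0 ≤ 1 - x := sub_nonneg.2 hx1
  simp only [bernsteinPolynomial, eval_mul, eval_pow, eval_sub, eval_one, eval_X, eval_natCast]
  positivity

theorem abs_eval_sum_smul_le (n : ℕ) (c : ℕ → ℝ) {C x : ℝ} (hc : ∀ j ≤ n, |c j| ≤ C)
    (hx : x ∈ Icc (0 : ℝ) 1) :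
    |(∑ j ∈ Finset.range (n + 1), c j • bernsteinPolynomial ℝ n j).eval x| ≤ C := by
  calc |(∑ j ∈ Finset.range (n + 1), c j • bernsteinPolynomial ℝ n j).eval x|
      ≤ ∑ j ∈ Finset.range (n + 1), |c j| * (bernsteinPolynomial ℝ n j).eval x := by
        simp only [eval_finsetSum, eval_smul, smul_eq_mul]
        refine (Finset.abs_sum_le_sum_abs _ _).trans_eq (Finset.sum_congr rfl fun j _ => ?_)
        rw [abs_mul, abs_of_nonneg (eval_nonneg hx)]
    _ ≤ ∑ j ∈ Finset.range (n + 1), C * (bernsteinPolynomial ℝ n j).eval x := by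
        gcongr with j hj
        · exact eval_nonneg hx
        · exact hc j (Nat.lt_succ_iff.1 (Finset.mem_range.1 hj))
    _ = C := by rw [← Finset.mul_sum, ← eval_finsetSum, sum, eval_one, mul_one]

end bernsteinPolynomial

open scoped NNReal

theorem LipschitzOnWith.abs_integral_shift_sub_le {f : ℝ → ℝ} {K : ℝ≥0} {a b u h : ℝ}
    (hf : LipschitzOnWith K f (Icc a b)) (hh : 0 ≤ h) (hau : a ≤ u) (hub : u + 2 * h ≤ b) :
    |(∫ t in (u + h)..(u + 2 * h), f t) - ∫ t in u..(u + h), f t| ≤ K * h ^ 2 := by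
  have hle : u ≤ u + h := le_add_of_nonneg_right hh
  have hmem {c t : ℝ} (hc : c ∈ Icc 0 h) (ht : t ∈ uIcc u (u + h)) : t + c ∈ Icc a b := by
    rw [uIcc_of_le hle] at ht
    constructor <;> linarith [ht.1, ht.2, hc.1, hc.2]
  have hint {c : ℝ} (hc : c ∈ Icc 0 h) :
      IntervalIntegrable (fun t => f (t + c)) volume u (u + h) :=
    (hf.continuousOn.comp (continuous_add_const c).continuousOn
      fun _ ht => hmem hc ht).intervalIntegrable
  have hdiff : (∫ t in (u + h)..(u + 2 * h), f t) - ∫ t in u..(u + h), f t =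
      ∫ t in u..(u + h), (f (t + h) - f t) := by
    rw [intervalIntegral.integral_sub (hint ⟨hh, le_rfl⟩) (by simpa using hint ⟨le_rfl, hh⟩),
      intervalIntegral.integral_comp_add_right]
    ring_nf
  have hbound : ∀ t ∈ uIoc u (u + h), ‖f (t + h) - f t‖ ≤ K * h := fun t ht => by
    have ht' : t ∈ uIcc u (u + h) := uIoc_subset_uIcc ht
    have := hf.dist_le_mul _ (hmem ⟨hh, le_rfl⟩ ht') _ (by simpa using hmem ⟨le_rfl, hh⟩ ht')
    rwa [Real.dist_eq, Real.dist_eq, add_sub_cancel_left, abs_of_nonneg hh] at this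
  calc |(∫ t in (u + h)..(u + 2 * h), f t) - ∫ t in u..(u + h), f t|
      ≤ K * h * |u + h - u| := by
        rw [hdiff, ← Real.norm_eq_abs]
        exact intervalIntegral.norm_integral_le_of_norm_le_const hbound
    _ = K * h ^ 2 := by rw [add_sub_cancel_left, abs_of_nonneg hh]; ring

theorem bp_eq_eval (n k : ℕ) (x : ℝ) : bp n k x = (bernsteinPolynomial ℝ n k).eval x := by
  simp [bp, bernsteinPolynomial]

noncomputable def kanCoeff (n : ℕ) (f : ℝ → ℝ) (k : ℕ) : ℝ :=
  ∫ t in ((k : ℝ) / (n + 1))..(((k : ℝ) + 1) / (n + 1)), f t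

theorem Kan_eq_eval (n : ℕ) (f : ℝ → ℝ) (x : ℝ) :
    Kan n f x = (n + 1) *
      (∑ k ∈ Finset.range (n + 1), kanCoeff n f k • bernsteinPolynomial ℝ n k).eval x := by
  simp only [Kan, kanCoeff, eval_finsetSum, eval_smul, smul_eq_mul, bp_eq_eval, mul_comm]

theorem abs_kanCoeff_succ_sub_le {n k : ℕ} {f : ℝ → ℝ} {K : ℝ≥0}
    (hf : LipschitzOnWith K f (Icc 0 1)) (hk : k < n) :
    |kanCoeff n f (k + 1) - kanCoeff n f k| ≤ K / (n + 1) ^ 2 := by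
  have hN : (0 : ℝ) < n + 1 := by positivity
  have hk' : (k : ℝ) + 2 ≤ n + 1 := by
    have : (k : ℝ) + 1 ≤ n := by exact_mod_cast hk
    linarith
  have key := hf.abs_integral_shift_sub_le (u := k / (n + 1)) (h := 1 / (n + 1))
    (by positivity) (by positivity) (by rw [mul_one_div, ← add_div, div_le_one hN]; linarith)
  convert key using 3
  · simp only [kanCoeff]
    congr 1 <;> push_cast <;> ring
  · simp only [kanCoeff]
    congr 1
    ring
  · rw [one_div_pow, mul_one_div]

theorem abs_deriv_Kan_le {n : ℕ} {f : ℝ → ℝ} {K : ℝ≥0} {x : ℝ} (hn : 1 ≤ n)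
    (hf : LipschitzOnWith K f (Icc 0 1)) (hx : x ∈ Icc (0 : ℝ) 1) :
    |deriv (Kan n f) x| ≤ n / (n + 1) * K := by
  have hderiv : HasDerivAt (Kan n f) ((n + 1) *
      (derivative (∑ k ∈ Finset.range (n + 1),
        kanCoeff n f k • bernsteinPolynomial ℝ n k)).eval x) x := by
    simp only [funext (Kan_eq_eval n f)]
    exact (Polynomial.hasDerivAt _ x).const_mul _
  have hsum := bernsteinPolynomial.abs_eval_sum_smul_le (n - 1)
    (fun j => kanCoeff n f (j + 1) - kanCoeff n f j)
    (fun j hj => abs_kanCoeff_succ_sub_le hf (by omega)) hx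
  rw [Nat.sub_add_cancel hn] at hsum
  have hN : (0 : ℝ) < n + 1 := by positivity
  rw [hderiv.deriv, bernsteinPolynomial.derivative_sum_smul, eval_mul, eval_natCast, abs_mul,
    abs_mul, abs_of_pos hN, Nat.abs_cast]
  calc (n + 1 : ℝ) * (n * _) ≤ (n + 1) * (n * (K / (n + 1) ^ 2)) := by gcongr
    _ = n / (n + 1) * K := by field_simp

theorem supNorm_nonneg (g : ℝ → ℝ) : 0 ≤ supNorm g :=
  Real.sSup_nonneg fun _ ⟨_, _, hy⟩ => hy ▸ abs_nonneg _

theorem abs_le_supNorm {g : ℝ → ℝ} (hg : ContinuousOn g (Icc 0 1)) {t : ℝ}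
    (ht : t ∈ Icc (0 : ℝ) 1) : |g t| ≤ supNorm g := by
  refine le_csSup ?_ ⟨t, ht, rfl⟩
  obtain ⟨C, hC⟩ := (isCompact_Icc.image_of_continuousOn hg.abs).bddAbove
  exact ⟨C, fun _ ⟨s, hs, hy⟩ => hy ▸ hC ⟨s, hs, rfl⟩⟩

theorem lipschitzOnWith_supNorm_deriv {f f' : ℝ → ℝ}
    (hf : ∀ t ∈ Icc (0 : ℝ) 1, HasDerivWithinAt f (f' t) (Icc 0 1) t)
    (hf' : ContinuousOn f' (Icc 0 1)) :
    LipschitzOnWith (supNorm f').toNNReal f (Icc 0 1) :=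
  (convex_Icc 0 1).lipschitzOnWith_of_nnnorm_hasDerivWithin_le hf fun t ht => by
    rw [← NNReal.coe_le_coe, coe_nnnorm, Real.coe_toNNReal _ (supNorm_nonneg f')]
    exact abs_le_supNorm hf' ht

/-- bound on the derivative of `K_n f`. -/
theorem stmt10 (n : ℕ) (hn : 1 ≤ n) (f f' : ℝ → ℝ)
    (hf : ∀ t ∈ Icc (0:ℝ) 1, HasDerivWithinAt f (f' t) (Icc 0 1) t)
    (hf' : ContinuousOn f' (Icc 0 1)) (x : ℝ) (hx : x ∈ Icc (0:ℝ) 1) :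
    |deriv (fun y => Kan n f y) x| ≤ (n : ℝ) / ((n : ℝ) + 1) * supNorm f' ∧
    (n : ℝ) / ((n : ℝ) + 1) * supNorm f' ≤ supNorm f' := by
  have hM := supNorm_nonneg f'
  refine ⟨?_, mul_le_of_le_one_left hM (div_le_one_of_le₀ (by linarith) (by positivity))⟩
  simpa [Real.coe_toNNReal _ hM] using
    abs_deriv_Kan_le hn (lipschitzOnWith_supNorm_deriv hf hf') hx
end
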